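/- Let M ∈ R^{d1×d2} have rank r and smallest nonzero singular value λ_r. Let U ∈ R^{d1×r}, V ∈ R^{d2×r} be a balanced factorization, i.e., U = W_U D^{1/2} and V = W_V D^{1/2} where W_U D W_Vᵀ is the SVD of UVᵀ. If (U, V) lies in the region D = {(U,V) : ‖UVᵀ − M‖_F² ≤ (λ_r/10)²}, then: (i) ‖(UVᵀ − M)V‖_F² + ‖(UVᵀ − M)ᵀU‖_F² ≥ (λ_r/2)·‖UVᵀ − M‖_F²; (ii) ‖U‖ = ‖V‖ ≤ √(2‖M‖); and (iii) ‖UVᵀ‖ = ‖VUᵀ‖, ‖VVᵀ‖ ≤ 2‖M‖, and ‖UUᵀ‖ ≤ 2‖M‖, where ‖·‖ denotes the operator norm. -/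
import Mathlib


open Matrix

noncomputable section

/-- Frobenius norm of a real matrix. -/
def frobNorm {m n : Type*} [Fintype m] [Fintype n] (A : Matrix m n ℝ) : ℝ :=
  Real.sqrt (∑ i, ∑ j, (A i j) ^ 2)

/-- ℓ2→ℓ2 operator (spectral) norm of a real matrix. -/
def opNorm {m n : Type*} [Fintype m] [Fintype n] (A : Matrix m n ℝ) : ℝ :=
  sSup {c | ∃ v : n → ℝ, (∑ j, (v j) ^ 2) ≤ 1 ∧ c = Real.sqrt (∑ i, (A.mulVec v i) ^ 2)}

namespace BRL
open Matrix
variable {m n p q : Type*} [Fintype m] [Fintype n] [Fintype p] [Fintype q]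

def sqs (v : n → ℝ) : ℝ := ∑ j, v j ^ 2
def F2 (A : Matrix m n ℝ) : ℝ := ∑ i, ∑ j, A i j ^ 2
def N (v : n → ℝ) : ℝ := Real.sqrt (sqs v)

lemma N_def (v : n → ℝ) : N v = Real.sqrt (sqs v) := rfl

lemma sqs_nonneg (v : n → ℝ) : 0 ≤ sqs v := Finset.sum_nonneg fun _ _ => sq_nonneg _
lemma F2_nonneg (A : Matrix m n ℝ) : 0 ≤ F2 A :=
  Finset.sum_nonneg fun _ _ => Finset.sum_nonneg fun _ _ => sq_nonneg _
lemma N_nonneg (v : n → ℝ) : 0 ≤ N v := Real.sqrt_nonneg _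

lemma N_eq_norm (v : n → ℝ) : N v = ‖(WithLp.equiv 2 (n → ℝ)).symm v‖ := by
  rw [EuclideanSpace.norm_eq]; simp [N, sqs]

lemma N_add_le (x y : n → ℝ) : N (x + y) ≤ N x + N y := by
  rw [N_eq_norm, N_eq_norm, N_eq_norm]
  rw [show (WithLp.equiv 2 (n → ℝ)).symm (x + y)
      = (WithLp.equiv 2 (n → ℝ)).symm x + (WithLp.equiv 2 (n → ℝ)).symm y from rfl]
  exact norm_add_le _ _

lemma N_neg (x : n → ℝ) : N (-x) = N x := by simp [N, sqs]

lemma sqs_mulVec_le (A : Matrix m n ℝ) (v : n → ℝ) : sqs (A *ᵥ v) ≤ F2 A * sqs v := by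
  rw [sqs, F2, Finset.sum_mul]
  exact Finset.sum_le_sum fun i _ => Finset.sum_mul_sq_le_sq_mul_sq _ _ _

lemma F2_mul_le (A : Matrix m n ℝ) (B : Matrix n p ℝ) : F2 (A * B) ≤ F2 A * F2 B := by
  rw [F2, F2, F2, Finset.sum_mul]
  apply Finset.sum_le_sum
  intro i _
  calc ∑ k, ((A * B) i k) ^ 2 ≤ ∑ k, (∑ j, A i j ^2) * (∑ j, (B j k)^2) := by
        apply Finset.sum_le_sum; intro k _
        rw [Matrix.mul_apply]
        exact Finset.sum_mul_sq_le_sq_mul_sq _ _ _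
    _ = (∑ j, A i j ^2) * ∑ k, ∑ j, (B j k)^2 := by rw [← Finset.mul_sum]
    _ = (∑ j, A i j ^2) * ∑ j, ∑ k, (B j k)^2 := by rw [Finset.sum_comm]

lemma F2_eq_trace (A : Matrix m n ℝ) : F2 A = (Aᵀ * A).trace := by
  simp [F2, Matrix.trace, Matrix.diag, Matrix.mul_apply, sq]
  exact Finset.sum_comm

lemma F2_transpose (A : Matrix m n ℝ) : F2 Aᵀ = F2 A := by
  simp [F2]; exact Finset.sum_comm

lemma F2_neg (A : Matrix m n ℝ) : F2 (-A) = F2 A := by simp [F2]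

lemma F2_orth_left [DecidableEq p] (X : Matrix m p ℝ) (hX : Xᵀ * X = 1)
    (A : Matrix p n ℝ) : F2 (X * A) = F2 A := by
  rw [F2_eq_trace, transpose_mul, ← Matrix.mul_assoc, Matrix.mul_assoc Aᵀ Xᵀ X, hX,
    Matrix.mul_one, ← F2_eq_trace]

lemma F2_orth_right [DecidableEq p] (A : Matrix m p ℝ) (X : Matrix n p ℝ) (hX : Xᵀ * X = 1) :
    F2 (A * Xᵀ) = F2 A := by
  rw [← F2_transpose, transpose_mul, transpose_transpose, F2_orth_left X hX, F2_transpose]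

lemma F2_add_of_orth (A B : Matrix m n ℝ) (h : (Aᵀ * B).trace = 0) :
    F2 (A + B) = F2 A + F2 B := by
  rw [F2_eq_trace, F2_eq_trace, F2_eq_trace, transpose_add]
  rw [Matrix.add_mul, Matrix.mul_add, Matrix.mul_add, trace_add, trace_add, trace_add]
  have h2 : (Bᵀ * A).trace = 0 := by
    rw [← trace_transpose, transpose_mul, transpose_transpose, h]
  rw [h, h2]; ring

lemma F2_mul_diag [DecidableEq n] (A : Matrix m n ℝ) (d : n → ℝ) :
    F2 (A * diagonal d) = ∑ i, ∑ j, A i j ^ 2 * d j ^ 2 := by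
  simp [F2, Matrix.mul_apply, Matrix.diagonal, mul_pow]

lemma F2_diag_mul [DecidableEq m] (d : m → ℝ) (B : Matrix m n ℝ) :
    F2 (diagonal d * B) = ∑ j, ∑ k, d j ^ 2 * B j k ^ 2 := by
  simp [F2, Matrix.mul_apply, Matrix.diagonal, mul_pow]

lemma pyth_right (A : Matrix m n ℝ) (Q : Matrix n n ℝ) (hs : Qᵀ = Q) (hi : Q * Q = Q) :
    F2 A = F2 (A * Q) + F2 (A - A * Q) := by
  have horth : ((A * Q)ᵀ * (A - A * Q)).trace = 0 := by
    have h1 : (A * Q)ᵀ * (A - A * Q) = Q * (Aᵀ * A) - Q * (Aᵀ * A) * Q := by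
      rw [transpose_mul, hs]
      simp only [Matrix.mul_sub, Matrix.mul_assoc]
    have h2 : (Q * (Aᵀ * A) * Q).trace = (Q * (Aᵀ * A)).trace := by
      rw [trace_mul_comm, ← Matrix.mul_assoc, hi]
    rw [h1, trace_sub, h2, sub_self]
  have hsum : A * Q + (A - A * Q) = A := by abel
  have := F2_add_of_orth (A * Q) (A - A * Q) horth
  rw [hsum] at this
  exact this

lemma pyth_left (A : Matrix m n ℝ) (P : Matrix m m ℝ) (hs : Pᵀ = P) (hi : P * P = P) :
    F2 A = F2 (P * A) + F2 (A - P * A) := by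
  have h := pyth_right Aᵀ P hs hi
  rw [F2_transpose] at h
  have e1 : Aᵀ * P = (P * A)ᵀ := by rw [transpose_mul, hs]
  have e2 : Aᵀ - Aᵀ * P = (A - P * A)ᵀ := by rw [transpose_sub, transpose_mul, hs]
  rw [e2, e1, F2_transpose, F2_transpose] at h
  exact h

lemma frobNorm_eq (A : Matrix m n ℝ) : frobNorm A = Real.sqrt (F2 A) := rfl
lemma frobNorm_nonneg (A : Matrix m n ℝ) : 0 ≤ frobNorm A := Real.sqrt_nonneg _
lemma frobNorm_sq (A : Matrix m n ℝ) : frobNorm A ^ 2 = F2 A := Real.sq_sqrt (F2_nonneg A)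

def opSet (A : Matrix m n ℝ) : Set ℝ :=
  {c | ∃ v : n → ℝ, (∑ j, (v j) ^ 2) ≤ 1 ∧ c = Real.sqrt (∑ i, (A.mulVec v i) ^ 2)}

lemma opNorm_eq (A : Matrix m n ℝ) : opNorm A = sSup (opSet A) := rfl

lemma mem_opSet (A : Matrix m n ℝ) (v : n → ℝ) (hv : sqs v ≤ 1) : N (A *ᵥ v) ∈ opSet A :=
  ⟨v, hv, rfl⟩

lemma zero_mem_opSet (A : Matrix m n ℝ) : (0:ℝ) ∈ opSet A := ⟨0, by simp, by simp⟩

lemma opSet_le_frob (A : Matrix m n ℝ) : ∀ x ∈ opSet A, x ≤ frobNorm A := by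
  rintro x ⟨v, hv, rfl⟩
  have h1 : sqs (A *ᵥ v) ≤ F2 A := by
    calc sqs (A *ᵥ v) ≤ F2 A * sqs v := sqs_mulVec_le A v
      _ ≤ F2 A * 1 := mul_le_mul_of_nonneg_left hv (F2_nonneg A)
      _ = F2 A := mul_one _
  exact Real.sqrt_le_sqrt h1

lemma opSet_bdd (A : Matrix m n ℝ) : BddAbove (opSet A) := ⟨frobNorm A, opSet_le_frob A⟩

lemma opNorm_nonneg (A : Matrix m n ℝ) : 0 ≤ opNorm A :=
  le_csSup (opSet_bdd A) (zero_mem_opSet A)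

lemma opNorm_le_frob (A : Matrix m n ℝ) : opNorm A ≤ frobNorm A :=
  csSup_le ⟨0, zero_mem_opSet A⟩ (opSet_le_frob A)

lemma N_mulVec_le_opNorm (A : Matrix m n ℝ) (v : n → ℝ) (hv : sqs v ≤ 1) :
    N (A *ᵥ v) ≤ opNorm A :=
  le_csSup (opSet_bdd A) (mem_opSet A v hv)

lemma opNorm_add_le (A B : Matrix m n ℝ) : opNorm (A + B) ≤ opNorm A + opNorm B := by
  apply csSup_le ⟨0, zero_mem_opSet _⟩
  rintro x ⟨v, hv, rfl⟩
  have h1 : (A + B) *ᵥ v = A *ᵥ v + B *ᵥ v := Matrix.add_mulVec A B v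
  calc Real.sqrt (∑ i, ((A + B) *ᵥ v) i ^ 2) = N ((A + B) *ᵥ v) := rfl
    _ = N (A *ᵥ v + B *ᵥ v) := by rw [h1]
    _ ≤ N (A *ᵥ v) + N (B *ᵥ v) := N_add_le _ _
    _ ≤ opNorm A + opNorm B :=
        add_le_add (N_mulVec_le_opNorm A v hv) (N_mulVec_le_opNorm B v hv)

lemma sqs_mulVec_orth [DecidableEq p] (X : Matrix m p ℝ) (hX : Xᵀ * X = 1) (u : p → ℝ) :
    sqs (X *ᵥ u) = sqs u := by
  have h : sqs (X *ᵥ u) = (X *ᵥ u) ⬝ᵥ (X *ᵥ u) := by simp [sqs, dotProduct, sq]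
  rw [h, dotProduct_mulVec, ← mulVec_transpose, mulVec_mulVec, hX, one_mulVec]
  simp [sqs, dotProduct, sq]

lemma sqs_proj_le [DecidableEq p] (Y : Matrix n p ℝ) (hY : Yᵀ * Y = 1) (v : n → ℝ) :
    sqs (Yᵀ *ᵥ v) ≤ sqs v := by
  set w := Yᵀ *ᵥ v with hw
  have hYw : sqs (Y *ᵥ w) = sqs w := sqs_mulVec_orth Y hY w
  have hdot : sqs w = v ⬝ᵥ (Y *ᵥ w) := by
    rw [dotProduct_mulVec, ← mulVec_transpose]
    simp [sqs, dotProduct, sq, hw]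
  have hcs : (v ⬝ᵥ (Y *ᵥ w)) ^ 2 ≤ sqs v * sqs (Y *ᵥ w) :=
    Finset.sum_mul_sq_le_sq_mul_sq _ _ _
  rw [← hdot, hYw] at hcs
  nlinarith [sqs_nonneg w, sqs_nonneg v]

lemma opNorm_odo [DecidableEq p] (X : Matrix m p ℝ) (Y : Matrix n p ℝ)
    (hX : Xᵀ * X = 1) (hY : Yᵀ * Y = 1) (g : p → ℝ) (hg : ∀ k, 0 ≤ g k)
    (jm : p) (hjm : ∀ k, g k ≤ g jm) :
    opNorm (X * diagonal g * Yᵀ) = g jm := by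
  apply le_antisymm
  · apply csSup_le ⟨0, zero_mem_opSet _⟩
    rintro x ⟨v, hv, rfl⟩
    have h1 : (X * diagonal g * Yᵀ) *ᵥ v = X *ᵥ (diagonal g *ᵥ (Yᵀ *ᵥ v)) := by
      rw [mulVec_mulVec, mulVec_mulVec]
    rw [h1]
    have h2 : sqs (X *ᵥ (diagonal g *ᵥ (Yᵀ *ᵥ v))) ≤ g jm ^ 2 := by
      rw [sqs_mulVec_orth X hX]
      set w := Yᵀ *ᵥ v with hw
      have hw1 : sqs w ≤ 1 := le_trans (sqs_proj_le Y hY v) hv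
      calc sqs (diagonal g *ᵥ w) = ∑ k, (g k) ^2 * (w k) ^2 := by
            simp [sqs, mulVec_diagonal, mul_pow]
        _ ≤ ∑ k, (g jm) ^2 * (w k) ^2 := by
            apply Finset.sum_le_sum; intro k _
            have := pow_le_pow_left₀ (hg k) (hjm k) 2
            nlinarith [sq_nonneg (w k)]
        _ = (g jm)^2 * sqs w := by rw [← Finset.mul_sum]; rfl
        _ ≤ (g jm)^2 * 1 := mul_le_mul_of_nonneg_left hw1 (sq_nonneg _)
        _ = (g jm)^2 := mul_one _
    calc Real.sqrt (∑ i, ((X *ᵥ (diagonal g *ᵥ (Yᵀ *ᵥ v))) i) ^2)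
        = Real.sqrt (sqs (X *ᵥ (diagonal g *ᵥ (Yᵀ *ᵥ v)))) := rfl
      _ ≤ Real.sqrt ((g jm)^2) := Real.sqrt_le_sqrt h2
      _ = g jm := Real.sqrt_sq (hg jm)
  · set v : n → ℝ := fun i => Y i jm with hv
    have hYv : Yᵀ *ᵥ v = Pi.single jm 1 := by
      ext k
      have h : (Yᵀ * Y) k jm = (1 : Matrix p p ℝ) k jm := by rw [hY]
      simpa [mulVec, dotProduct, Matrix.mul_apply, transpose_apply, Matrix.one_apply,
        Pi.single_apply, eq_comm] using h
    have hsv : sqs v = 1 := by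
      have h : sqs v = (Yᵀ * Y) jm jm := by
        simp [sqs, Matrix.mul_apply, transpose_apply, sq, hv]
      rw [h, hY, Matrix.one_apply_eq]
    have key : N ((X * diagonal g * Yᵀ) *ᵥ v) = g jm := by
      have h1 : (X * diagonal g * Yᵀ) *ᵥ v = X *ᵥ (diagonal g *ᵥ (Yᵀ *ᵥ v)) := by
        rw [mulVec_mulVec, mulVec_mulVec]
      rw [N, h1, sqs_mulVec_orth X hX, hYv]
      have h2 : sqs (diagonal g *ᵥ Pi.single jm 1) = (g jm) ^2 := by
        simp [sqs, mulVec_diagonal, Pi.single_apply, mul_pow]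
      rw [h2, Real.sqrt_sq (hg jm)]
    rw [← key]
    exact N_mulVec_le_opNorm _ v (le_of_eq hsv)

lemma exists_unit_kernel {r : ℕ} (K : Matrix (Fin r) (Fin r) ℝ) (j0 : Fin r) :
    ∃ c : Fin r → ℝ, sqs c = 1 ∧ ∀ k, k ≠ j0 → (K *ᵥ c) k = 0 := by
  set φ : (Fin r → ℝ) →ₗ[ℝ] ({k : Fin r // k ≠ j0} → ℝ) :=
    (LinearMap.funLeft ℝ ℝ (Subtype.val : {k : Fin r // k ≠ j0} → Fin r)).comp K.mulVecLin
    with hφ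
  have hnotinj : ¬ Function.Injective φ := by
    intro hinj
    have h1 := LinearMap.finrank_le_finrank_of_injective hinj
    rw [Module.finrank_pi, Module.finrank_pi] at h1
    have h2 : Fintype.card {k : Fin r // k ≠ j0} = r - 1 := by
      have := Fintype.card_subtype_compl (fun k : Fin r => k = j0)
      simpa [Fintype.card_subtype_eq] using this
    rw [h2, Fintype.card_fin] at h1
    have := j0.2
    omega
  rw [Function.not_injective_iff] at hnotinj
  obtain ⟨x, y, hxy, hne⟩ := hnotinj
  set c1 := x - y with hc1
  have hc1ne : c1 ≠ 0 := sub_ne_zero_of_ne hne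
  have hker : ∀ k, k ≠ j0 → (K *ᵥ c1) k = 0 := by
    intro k hk
    have h : φ c1 = 0 := by rw [hc1, map_sub, hxy, sub_self]
    have := congrFun h ⟨k, hk⟩
    simpa [hφ, LinearMap.funLeft, mulVecLin] using this
  have hpos : 0 < sqs c1 := by
    rcases Function.ne_iff.mp hc1ne with ⟨k, hk⟩
    have h : 0 < c1 k ^ 2 := lt_of_le_of_ne (sq_nonneg _) (Ne.symm (pow_ne_zero 2 hk))
    calc (0:ℝ) < c1 k ^ 2 := h
      _ ≤ sqs c1 := Finset.single_le_sum (fun i _ => sq_nonneg (c1 i)) (Finset.mem_univ k)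
  refine ⟨(Real.sqrt (sqs c1))⁻¹ • c1, ?_, ?_⟩
  · have h : sqs ((Real.sqrt (sqs c1))⁻¹ • c1) = ((Real.sqrt (sqs c1))⁻¹)^2 * sqs c1 := by
      simp [sqs, Finset.mul_sum, mul_pow]
    rw [h, inv_pow, Real.sq_sqrt hpos.le, inv_mul_cancel₀ (ne_of_gt hpos)]
  · intro k hk
    rw [mulVec_smul]
    simp [hker k hk]


lemma bal_mul [DecidableEq p] (X : Matrix m p ℝ) (Y : Matrix n p ℝ) (d : p → ℝ) :
    (X * diagonal d) * (Y * diagonal d)ᵀ = X * diagonal (fun j => d j ^ 2) * Yᵀ := by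
  rw [transpose_mul, diagonal_transpose, ← Matrix.mul_assoc,
    Matrix.mul_assoc X (diagonal d) (diagonal d), diagonal_mul_diagonal]
  have h : (fun i => d i * d i) = fun j => d j ^ 2 := by funext j; simp [sq]
  rw [h]

end BRL

open BRL
set_option maxHeartbeats 2000000

/-- **Benign-region lemma (Lemma A.4).**
Let `M = W diag(s) Zᵀ` be a rank-`r` real `d1×d2` matrix whose nonzero singular values `s j`
are all `≥ lamr`, with `lamr` attained (so `lamr` is the smallest nonzero singular value).
Let `(U, V)` be a balanced factorization, `U = W_U D^{1/2}`, `V = W_V D^{1/2}`, where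
`W_U D W_Vᵀ` is the SVD of `UVᵀ`.  If `(U,V)` lies in the region
`D = {(U,V) : ‖UVᵀ − M‖_F² ≤ (lamr/10)²}`, then
(i)  `‖(UVᵀ−M)V‖_F² + ‖(UVᵀ−M)ᵀU‖_F² ≥ (lamr/2)‖UVᵀ−M‖_F²`;
(ii) `‖U‖ = ‖V‖ ≤ √(2‖M‖)`;
(iii) `‖UVᵀ‖ = ‖VUᵀ‖`, `‖VVᵀ‖ ≤ 2‖M‖` and `‖UUᵀ‖ ≤ 2‖M‖`. -/
theorem benign_region_lemma
    (d1 d2 r : ℕ) (lamr : ℝ) (hlamr : 0 < lamr)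
    (M : Matrix (Fin d1) (Fin d2) ℝ)
    -- rank-r SVD structure of `M`, with smallest nonzero singular value `lamr`
    (W : Matrix (Fin d1) (Fin r) ℝ) (Z : Matrix (Fin d2) (Fin r) ℝ) (s : Fin r → ℝ)
    (hW : Wᵀ * W = 1) (hZ : Zᵀ * Z = 1)
    (hM : M = W * Matrix.diagonal s * Zᵀ)
    (hrank : M.rank = r)
    (hs : ∀ j, lamr ≤ s j) (hsmin : ∃ j, s j = lamr)
    -- balanced factorization `U = W_U D^{1/2}`, `V = W_V D^{1/2}` of a rank-r pair
    (U : Matrix (Fin d1) (Fin r) ℝ) (V : Matrix (Fin d2) (Fin r) ℝ)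
    (WU : Matrix (Fin d1) (Fin r) ℝ) (WV : Matrix (Fin d2) (Fin r) ℝ) (Dh : Fin r → ℝ)
    (hWU : WUᵀ * WU = 1) (hWV : WVᵀ * WV = 1) (hDh : ∀ j, 0 ≤ Dh j)
    (hUbal : U = WU * Matrix.diagonal Dh) (hVbal : V = WV * Matrix.diagonal Dh)
    -- `(U,V)` lies in the benign region `D`
    (hregion : frobNorm (U * Vᵀ - M) ^ 2 ≤ (lamr / 10) ^ 2) :
    (frobNorm ((U * Vᵀ - M) * V) ^ 2 + frobNorm ((U * Vᵀ - M)ᵀ * U) ^ 2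
        ≥ (lamr / 2) * frobNorm (U * Vᵀ - M) ^ 2) ∧
    (opNorm U = opNorm V ∧ opNorm U ≤ Real.sqrt (2 * opNorm M)) ∧
    (opNorm (U * Vᵀ) = opNorm (V * Uᵀ) ∧
      opNorm (V * Vᵀ) ≤ 2 * opNorm M ∧ opNorm (U * Uᵀ) ≤ 2 * opNorm M) := by
  classical
  obtain ⟨j0, hj0⟩ := hsmin
  set E := U * Vᵀ - M with hE
  set g : Fin r → ℝ := fun j => Dh j ^ 2 with hg
  have hgj : ∀ j, g j = Dh j ^ 2 := fun j => rfl
  have hgnn : ∀ k, 0 ≤ g k := fun k => sq_nonneg _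
  set P := WU * WUᵀ with hP
  set Q := WV * WVᵀ with hQ
  have hPs : Pᵀ = P := by rw [hP, transpose_mul, transpose_transpose]
  have hQs : Qᵀ = Q := by rw [hQ, transpose_mul, transpose_transpose]
  have hPi : P * P = P := by
    rw [hP, Matrix.mul_assoc, ← Matrix.mul_assoc WUᵀ WU WUᵀ, hWU, Matrix.one_mul]
  have hQi : Q * Q = Q := by
    rw [hQ, Matrix.mul_assoc, ← Matrix.mul_assoc WVᵀ WV WVᵀ, hWV, Matrix.one_mul]
  have hUV : U * Vᵀ = WU * Matrix.diagonal g * WVᵀ := by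
    rw [hUbal, hVbal, BRL.bal_mul, hg]
  have hVU : V * Uᵀ = WV * Matrix.diagonal g * WUᵀ := by
    rw [hUbal, hVbal, BRL.bal_mul, hg]
  have hVV : V * Vᵀ = WV * Matrix.diagonal g * WVᵀ := by
    rw [hVbal, BRL.bal_mul, hg]
  have hUU : U * Uᵀ = WU * Matrix.diagonal g * WUᵀ := by
    rw [hUbal, BRL.bal_mul, hg]
  have hF2E : F2 E ≤ (lamr / 10) ^ 2 := by rw [← frobNorm_sq]; exact hregion
  have hfE : frobNorm E ≤ lamr / 10 := by
    have h := Real.sqrt_le_sqrt hregion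
    rwa [Real.sqrt_sq (frobNorm_nonneg E), Real.sqrt_sq (by positivity)] at h
  -- lower bound on the squared diagonal entries
  have hD2lb : ∀ j1 : Fin r, (9/10) * lamr ≤ g j1 := by
    intro j1
    obtain ⟨c, hc1, hker⟩ := BRL.exists_unit_kernel (WVᵀ * Z) j1
    set v := Z *ᵥ c with hv
    have hsv : sqs v = 1 := by rw [hv, sqs_mulVec_orth Z hZ, hc1]
    have hMv : lamr ≤ N (M *ᵥ v) := by
      have h1 : M *ᵥ v = W *ᵥ (Matrix.diagonal s *ᵥ c) := by
        rw [hv, hM, mulVec_mulVec, mulVec_mulVec]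
        congr 1
        rw [Matrix.mul_assoc (W * Matrix.diagonal s) Zᵀ Z, hZ, Matrix.mul_one]
      have h2 : sqs (M *ᵥ v) = ∑ j, s j ^ 2 * c j ^ 2 := by
        rw [h1, sqs_mulVec_orth W hW]
        simp [BRL.sqs, mulVec_diagonal, mul_pow]
      have h3 : lamr ^ 2 ≤ sqs (M *ᵥ v) := by
        rw [h2]
        calc lamr ^ 2 = lamr ^ 2 * sqs c := by rw [hc1, mul_one]
          _ = ∑ j, lamr ^ 2 * c j ^ 2 := by rw [BRL.sqs, Finset.mul_sum]
          _ ≤ ∑ j, s j ^ 2 * c j ^ 2 := by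
              apply Finset.sum_le_sum; intro j _
              have hsq : lamr ^ 2 ≤ s j ^ 2 := by nlinarith [hs j]
              exact mul_le_mul_of_nonneg_right hsq (sq_nonneg (c j))
      calc lamr = Real.sqrt (lamr ^ 2) := (Real.sqrt_sq hlamr.le).symm
        _ ≤ N (M *ᵥ v) := Real.sqrt_le_sqrt h3
    have hEv : N (E *ᵥ v) ≤ lamr / 10 := by
      have h1 : sqs (E *ᵥ v) ≤ (lamr / 10) ^ 2 := by
        calc sqs (E *ᵥ v) ≤ F2 E * sqs v := sqs_mulVec_le E v
          _ = F2 E := by rw [hsv, mul_one]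
          _ ≤ (lamr / 10) ^ 2 := hF2E
      calc N (E *ᵥ v) ≤ Real.sqrt ((lamr / 10) ^ 2) := Real.sqrt_le_sqrt h1
        _ = lamr / 10 := Real.sqrt_sq (by positivity)
    have hAv : N ((U * Vᵀ) *ᵥ v) ≤ g j1 := by
      set w := (WVᵀ * Z) *ᵥ c with hw
      have hww : sqs w ≤ 1 := by
        have h1 : w = WVᵀ *ᵥ v := by rw [hw, hv, mulVec_mulVec]
        rw [h1]
        calc sqs (WVᵀ *ᵥ v) ≤ sqs v := sqs_proj_le WV hWV v
          _ = 1 := hsv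
      have h1 : (U * Vᵀ) *ᵥ v = WU *ᵥ (Matrix.diagonal g *ᵥ w) := by
        rw [hv, hw, mulVec_mulVec, mulVec_mulVec, mulVec_mulVec, hUV]
        congr 1
        rw [Matrix.mul_assoc, Matrix.mul_assoc]
      have h2 : sqs ((U * Vᵀ) *ᵥ v) = ∑ k, g k ^ 2 * w k ^ 2 := by
        rw [h1, sqs_mulVec_orth WU hWU]
        simp [BRL.sqs, mulVec_diagonal, mul_pow]
      have h3 : sqs ((U * Vᵀ) *ᵥ v) ≤ g j1 ^ 2 := by
        rw [h2, Finset.sum_eq_single j1]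
        · have h4 : w j1 ^ 2 ≤ sqs w :=
            Finset.single_le_sum (fun i _ => sq_nonneg (w i)) (Finset.mem_univ j1)
          nlinarith [sq_nonneg (g j1), hww, sq_nonneg (w j1)]
        · intro k _ hk
          rw [hker k hk]
          ring
        · intro h; exact absurd (Finset.mem_univ j1) h
      calc N ((U * Vᵀ) *ᵥ v) ≤ Real.sqrt (g j1 ^ 2) := Real.sqrt_le_sqrt h3
        _ = g j1 := Real.sqrt_sq (hgnn j1)
    have htri : M *ᵥ v = (U * Vᵀ) *ᵥ v + -(E *ᵥ v) := by
      rw [hE, Matrix.sub_mulVec]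
      abel
    have h5 := BRL.N_add_le ((U * Vᵀ) *ᵥ v) (-(E *ᵥ v))
    rw [← htri, BRL.N_neg] at h5
    linarith
  -- ============ part (i) ============
  have hEQWV : E * Q = (E * WV) * WVᵀ := by rw [hQ, ← Matrix.mul_assoc]
  have hEQ_F2 : F2 (E * Q) = F2 (E * WV) := by rw [hEQWV, BRL.F2_orth_right _ WV hWV]
  have hPE_F2 : F2 (P * E) = F2 (Eᵀ * WU) := by
    rw [← BRL.F2_transpose (P * E), transpose_mul, hPs, hP, ← Matrix.mul_assoc,
      BRL.F2_orth_right _ WU hWU]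
  have hstepA : (9/10) * lamr * F2 (E * WV) ≤ F2 (E * V) := by
    have h1 : E * V = (E * WV) * Matrix.diagonal Dh := by rw [hVbal, ← Matrix.mul_assoc]
    rw [h1, BRL.F2_mul_diag]
    simp only [BRL.F2]
    rw [Finset.mul_sum]
    apply Finset.sum_le_sum; intro i _
    rw [Finset.mul_sum]
    apply Finset.sum_le_sum; intro j _
    have h2 := hD2lb j
    rw [hgj j] at h2
    nlinarith [sq_nonneg ((E * WV) i j)]
  have hstepB : (9/10) * lamr * F2 (Eᵀ * WU) ≤ F2 (Eᵀ * U) := by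
    have h1 : Eᵀ * U = (Eᵀ * WU) * Matrix.diagonal Dh := by rw [hUbal, ← Matrix.mul_assoc]
    rw [h1, BRL.F2_mul_diag]
    simp only [BRL.F2]
    rw [Finset.mul_sum]
    apply Finset.sum_le_sum; intro i _
    rw [Finset.mul_sum]
    apply Finset.sum_le_sum; intro j _
    have h2 := hD2lb j
    rw [hgj j] at h2
    nlinarith [sq_nonneg ((Eᵀ * WU) i j)]
  have hp1 : F2 E = F2 (E * Q) + F2 (E - E * Q) := BRL.pyth_right E Q hQs hQi
  have hp2 : F2 (E - E * Q) = F2 (P * (E - E * Q)) + F2 ((E - E * Q) - P * (E - E * Q)) :=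
    BRL.pyth_left _ P hPs hPi
  have hp3 : F2 (P * (E - E * Q)) ≤ F2 (P * E) := by
    have h1 : P * (E - E * Q) = (P * E) - (P * E) * Q := by
      rw [Matrix.mul_sub, ← Matrix.mul_assoc P E Q]
    rw [h1]
    have h2 := BRL.pyth_right (P * E) Q hQs hQi
    have h3 := BRL.F2_nonneg ((P * E) * Q)
    linarith
  have hPU : P * U = U := by
    rw [hUbal, hP, Matrix.mul_assoc WU WUᵀ (WU * Matrix.diagonal Dh),
      ← Matrix.mul_assoc WUᵀ WU (Matrix.diagonal Dh), hWU, Matrix.one_mul]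
  have hQV : Q * V = V := by
    rw [hVbal, hQ, Matrix.mul_assoc WV WVᵀ (WV * Matrix.diagonal Dh),
      ← Matrix.mul_assoc WVᵀ WV (Matrix.diagonal Dh), hWV, Matrix.one_mul]
  have hVQ : Vᵀ * Q = Vᵀ := by rw [← hQs, ← transpose_mul, hQV]
  have hEmPE : E - P * E = P * M - M := by
    rw [hE, Matrix.mul_sub, ← Matrix.mul_assoc, hPU]
    abel
  have hEmEQ : E - E * Q = M * Q - M := by
    rw [hE, Matrix.sub_mul, Matrix.mul_assoc, hVQ]
    abel
  have hG_F2 : F2 (M - P * M) ≤ F2 E := by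
    have h1 : M - P * M = -(E - P * E) := by rw [hEmPE]; abel
    rw [h1, BRL.F2_neg]
    have h2 := BRL.pyth_left E P hPs hPi
    have h3 := BRL.F2_nonneg (P * E)
    linarith
  have hH_F2 : F2 (M - M * Q) ≤ F2 E := by
    have h1 : M - M * Q = -(E - E * Q) := by rw [hEmEQ]; abel
    rw [h1, BRL.F2_neg]
    have h2 := BRL.pyth_right E Q hQs hQi
    have h3 := BRL.F2_nonneg (E * Q)
    linarith
  have hXid : (M - M * Q) - P * (M - M * Q)
      = (W - P * W) * Matrix.diagonal s * (Zᵀ - Zᵀ * Q) := by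
    simp only [Matrix.sub_mul, Matrix.mul_sub, Matrix.mul_assoc, hM]
    abel
  set sh : Fin r → ℝ := fun j => Real.sqrt (s j) with hsh
  have hshj : ∀ j, sh j = Real.sqrt (s j) := fun j => rfl
  have hsplit : (W - P * W) * Matrix.diagonal s * (Zᵀ - Zᵀ * Q)
      = ((W - P * W) * Matrix.diagonal sh) * (Matrix.diagonal sh * (Zᵀ - Zᵀ * Q)) := by
    have h1 : Matrix.diagonal sh * Matrix.diagonal sh = Matrix.diagonal s := by
      rw [Matrix.diagonal_mul_diagonal]
      have h2 : (fun i => sh i * sh i) = s := by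
        funext j
        rw [hshj j]
        exact Real.mul_self_sqrt (le_trans hlamr.le (hs j))
      rw [h2]
    rw [← Matrix.mul_assoc ((W - P * W) * Matrix.diagonal sh) (Matrix.diagonal sh) (Zᵀ - Zᵀ * Q),
      Matrix.mul_assoc (W - P * W) (Matrix.diagonal sh) (Matrix.diagonal sh), h1]
  have hA1 : lamr * F2 ((W - P * W) * Matrix.diagonal sh)
      ≤ F2 ((W - P * W) * Matrix.diagonal s) := by
    rw [BRL.F2_mul_diag, BRL.F2_mul_diag, Finset.mul_sum]
    apply Finset.sum_le_sum; intro i _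
    rw [Finset.mul_sum]
    apply Finset.sum_le_sum; intro j _
    have h0 : 0 ≤ s j := le_trans hlamr.le (hs j)
    rw [hshj j, Real.sq_sqrt h0]
    nlinarith [mul_nonneg (mul_nonneg (sq_nonneg ((W - P * W) i j)) h0)
      (sub_nonneg.mpr (hs j))]
  have hB1 : lamr * F2 (Matrix.diagonal sh * (Zᵀ - Zᵀ * Q))
      ≤ F2 (Matrix.diagonal s * (Zᵀ - Zᵀ * Q)) := by
    rw [BRL.F2_diag_mul, BRL.F2_diag_mul, Finset.mul_sum]
    apply Finset.sum_le_sum; intro j _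
    rw [Finset.mul_sum]
    apply Finset.sum_le_sum; intro k _
    have h0 : 0 ≤ s j := le_trans hlamr.le (hs j)
    rw [hshj j, Real.sq_sqrt h0]
    nlinarith [mul_nonneg (mul_nonneg (sq_nonneg ((Zᵀ - Zᵀ * Q) j k)) h0)
      (sub_nonneg.mpr (hs j))]
  have hA2 : F2 ((W - P * W) * Matrix.diagonal s) = F2 (M - P * M) := by
    have h1 : (W - P * W) * Matrix.diagonal s * Zᵀ = M - P * M := by
      simp only [Matrix.sub_mul, Matrix.mul_assoc, hM]
    rw [← BRL.F2_orth_right ((W - P * W) * Matrix.diagonal s) Z hZ, h1]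
  have hB2 : F2 (Matrix.diagonal s * (Zᵀ - Zᵀ * Q)) = F2 (M - M * Q) := by
    have h1 : W * (Matrix.diagonal s * (Zᵀ - Zᵀ * Q)) = M - M * Q := by
      simp only [Matrix.mul_sub, Matrix.mul_assoc, hM]
    rw [← BRL.F2_orth_left W hW (Matrix.diagonal s * (Zᵀ - Zᵀ * Q)), h1]
  have hXb : F2 ((M - M * Q) - P * (M - M * Q)) ≤ F2 E / 100 := by
    have h1 : F2 ((M - M * Q) - P * (M - M * Q))
        ≤ F2 ((W - P * W) * Matrix.diagonal sh) * F2 (Matrix.diagonal sh * (Zᵀ - Zᵀ * Q)) := by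
      rw [hXid, hsplit]
      exact BRL.F2_mul_le _ _
    have h2 : lamr ^ 2 * (F2 ((W - P * W) * Matrix.diagonal sh)
          * F2 (Matrix.diagonal sh * (Zᵀ - Zᵀ * Q)))
        ≤ F2 (M - P * M) * F2 (M - M * Q) := by
      have e1 : lamr ^ 2 * (F2 ((W - P * W) * Matrix.diagonal sh)
            * F2 (Matrix.diagonal sh * (Zᵀ - Zᵀ * Q)))
          = (lamr * F2 ((W - P * W) * Matrix.diagonal sh))
            * (lamr * F2 (Matrix.diagonal sh * (Zᵀ - Zᵀ * Q))) := by ring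
      rw [e1, ← hA2, ← hB2]
      apply mul_le_mul hA1 hB1 (mul_nonneg hlamr.le (BRL.F2_nonneg _)) (BRL.F2_nonneg _)
    have h3 : F2 (M - P * M) * F2 (M - M * Q) ≤ F2 E * (lamr ^ 2 / 100) := by
      have e2 : F2 E ≤ lamr ^ 2 / 100 := by
        have : (lamr / 10) ^ 2 = lamr ^ 2 / 100 := by ring
        linarith [hF2E, this.symm.le]
      calc F2 (M - P * M) * F2 (M - M * Q)
          ≤ F2 E * F2 (M - M * Q) :=
            mul_le_mul_of_nonneg_right hG_F2 (BRL.F2_nonneg _)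
        _ ≤ F2 E * (lamr ^ 2 / 100) :=
            mul_le_mul_of_nonneg_left (le_trans hH_F2 e2) (BRL.F2_nonneg E)
    have h4 : lamr ^ 2 * F2 ((M - M * Q) - P * (M - M * Q))
        ≤ lamr ^ 2 * (F2 E / 100) := by
      calc lamr ^ 2 * F2 ((M - M * Q) - P * (M - M * Q))
          ≤ lamr ^ 2 * (F2 ((W - P * W) * Matrix.diagonal sh)
              * F2 (Matrix.diagonal sh * (Zᵀ - Zᵀ * Q))) :=
            mul_le_mul_of_nonneg_left h1 (by positivity)
        _ ≤ F2 (M - P * M) * F2 (M - M * Q) := h2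
        _ ≤ F2 E * (lamr ^ 2 / 100) := h3
        _ = lamr ^ 2 * (F2 E / 100) := by ring
    have h5 : (0:ℝ) < lamr ^ 2 := by positivity
    exact le_of_mul_le_mul_left h4 h5
  have hXeq : (E - E * Q) - P * (E - E * Q) = -((M - M * Q) - P * (M - M * Q)) := by
    rw [hEmEQ, Matrix.mul_sub, Matrix.mul_sub]
    abel
  have hXb' : F2 ((E - E * Q) - P * (E - E * Q)) ≤ F2 E / 100 := by
    rw [hXeq, BRL.F2_neg]
    exact hXb
  have hcore : (99/100) * F2 E ≤ F2 (E * Q) + F2 (P * E) := by linarith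
  have parti : frobNorm (E * V) ^ 2 + frobNorm (Eᵀ * U) ^ 2
      ≥ (lamr / 2) * frobNorm E ^ 2 := by
    rw [frobNorm_sq, frobNorm_sq, frobNorm_sq]
    rw [hEQ_F2, hPE_F2] at hcore
    have h6 : (9/10) * lamr * ((99/100) * F2 E)
        ≤ (9/10) * lamr * (F2 (E * WV) + F2 (Eᵀ * WU)) :=
      mul_le_mul_of_nonneg_left hcore (by positivity)
    nlinarith [BRL.F2_nonneg E, hstepA, hstepB]
  -- ============ parts (ii) and (iii) ============
  have hne : Nonempty (Fin r) := ⟨j0⟩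
  obtain ⟨jm, hjm⟩ := Finite.exists_max Dh
  have hgjm : ∀ k, g k ≤ g jm := by
    intro k
    rw [hgj k, hgj jm]
    exact pow_le_pow_left₀ (hDh k) (hjm k) 2
  have hUVop : opNorm (U * Vᵀ) = g jm := by
    rw [hUV]; exact BRL.opNorm_odo WU WV hWU hWV g hgnn jm hgjm
  have hVUop : opNorm (V * Uᵀ) = g jm := by
    rw [hVU]; exact BRL.opNorm_odo WV WU hWV hWU g hgnn jm hgjm
  have hVVop : opNorm (V * Vᵀ) = g jm := by
    rw [hVV]; exact BRL.opNorm_odo WV WV hWV hWV g hgnn jm hgjm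
  have hUUop : opNorm (U * Uᵀ) = g jm := by
    rw [hUU]; exact BRL.opNorm_odo WU WU hWU hWU g hgnn jm hgjm
  have hUop : opNorm U = Dh jm := by
    have h1 : U = WU * Matrix.diagonal Dh * (1 : Matrix (Fin r) (Fin r) ℝ)ᵀ := by
      rw [Matrix.transpose_one, Matrix.mul_one, hUbal]
    rw [h1]
    exact BRL.opNorm_odo WU 1 hWU (by simp) Dh hDh jm hjm
  have hVop : opNorm V = Dh jm := by
    have h1 : V = WV * Matrix.diagonal Dh * (1 : Matrix (Fin r) (Fin r) ℝ)ᵀ := by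
      rw [Matrix.transpose_one, Matrix.mul_one, hVbal]
    rw [h1]
    exact BRL.opNorm_odo WV 1 hWV (by simp) Dh hDh jm hjm
  have hlamM : lamr ≤ opNorm M := by
    set e0 : Fin r → ℝ := Pi.single j0 1 with he0
    have hse : sqs e0 = 1 := by simp [BRL.sqs, he0, Pi.single_apply]
    set v0 := Z *ᵥ e0 with hv0
    have hsv0 : sqs v0 ≤ 1 := by rw [hv0, sqs_mulVec_orth Z hZ, hse]
    have hNv : N (M *ᵥ v0) = lamr := by
      have h1 : M *ᵥ v0 = W *ᵥ (Matrix.diagonal s *ᵥ e0) := by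
        rw [hv0, hM, mulVec_mulVec, mulVec_mulVec]
        congr 1
        rw [Matrix.mul_assoc (W * Matrix.diagonal s) Zᵀ Z, hZ, Matrix.mul_one]
      rw [BRL.N_def, h1, sqs_mulVec_orth W hW]
      have h2 : sqs (Matrix.diagonal s *ᵥ e0) = s j0 ^ 2 := by
        simp [BRL.sqs, mulVec_diagonal, he0, Pi.single_apply, mul_pow]
      rw [h2, hj0, Real.sqrt_sq hlamr.le]
    calc lamr = N (M *ᵥ v0) := hNv.symm
      _ ≤ opNorm M := BRL.N_mulVec_le_opNorm M v0 hsv0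
  have hEopb : opNorm E ≤ lamr / 10 := le_trans (BRL.opNorm_le_frob E) hfE
  have hmu : g jm ≤ 2 * opNorm M := by
    have h1 : U * Vᵀ = M + E := by rw [hE]; abel
    have h2 : opNorm (U * Vᵀ) ≤ opNorm M + opNorm E := by
      rw [h1]; exact BRL.opNorm_add_le M E
    rw [hUVop] at h2
    linarith
  refine ⟨parti, ⟨?_, ?_⟩, ?_, ?_, ?_⟩
  · rw [hUop, hVop]
  · rw [hUop]
    have h1 : Dh jm = Real.sqrt (g jm) := by
      rw [hgj jm, Real.sqrt_sq (hDh jm)]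
    rw [h1]
    exact Real.sqrt_le_sqrt hmu
  · rw [hUVop, hVUop]
  · rw [hVVop]; exact hmu
  · rw [hUUop]; exact hmu

end
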